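/- Let d ≥ 3 and 0 < s < d−2. There exist constants C > 0 and ε₀ > 0 (depending only on s and d) such that: for all x₀, y₀ ∈ 𝕊^d with geodesic distance θ₀ = arccos⟨x₀,y₀⟩ > 0 and all ε with 0 < ε ≤ min(ε₀, θ₀/2), one has ∫_{B_g(x₀,ε)} K_s(x,y₀) dσ(x) ≥ σ(B_g(x₀,ε))·K_s(x₀,y₀) + C·(s + 2 − 2d)·(1 − cos(θ₀/2))^{−s/2 − 1}·ε^{d+2}, where B_g(x₀,ε) = {x ∈ 𝕊^d : arccos⟨x,x₀⟩ < ε} is the open geodesic ball. -/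

import Mathlib

open MeasureTheory Finset
open scoped InnerProductSpace

/-- The Riesz `s`-kernel (for `s ≠ 0`): `K_s(x,y) = (1/s)‖x-y‖^{-s}`. -/
noncomputable def rieszK (s : ℝ) {E : Type*} [NormedAddCommGroup E] (x y : E) : ℝ :=
  (1 / s) * ‖x - y‖ ^ (-s)

/-- The normalized uniform surface measure `σ` on the unit sphere `𝕊^d ⊂ ℝ^{d+1}`
(the normalized `d`-dimensional Hausdorff measure restricted to the sphere). -/
noncomputable def sphereSigma (d : ℕ) : Measure (EuclideanSpace ℝ (Fin (d + 1))) :=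
  (μH[(d : ℝ)] (Metric.sphere (0 : EuclideanSpace ℝ (Fin (d + 1))) 1))⁻¹ •
    (μH[(d : ℝ)]).restrict (Metric.sphere (0 : EuclideanSpace ℝ (Fin (d + 1))) 1)

/-- The Wiener constant `I_{s,d} = ∫_{𝕊^d} K_s(x,y) dσ(y)` (independent of `x ∈ 𝕊^d`,
computed here at the north pole). -/
noncomputable def wienerRiesz (d : ℕ) (s : ℝ) : ℝ :=
  ∫ y, rieszK s (EuclideanSpace.single (0 : Fin (d + 1)) (1 : ℝ)) y ∂(sphereSigma d)

/-!
The reflection `R` through the line `ℝ x₀` preserves `σ` and the geodesic ball `B = B_g(x₀, ε)`,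
so `∫_B K_s(x, y₀) dσ = ½ ∫_B (K_s(x, y₀) + K_s(R x, y₀)) dσ`. For unit vectors
`K_s(x, y₀) = f ⟪x, y₀⟫` with `f t = (1/s) (2 - 2t)^(-s/2)` convex and increasing, and
`⟪x, y₀⟫ + ⟪R x, y₀⟫ = 2 ⟪x, x₀⟫ ⟪x₀, y₀⟫`. By convexity the symmetrized kernel is at least
`2 f (⟪x, x₀⟫ ⟪x₀, y₀⟫)`, and the tangent line of `f` at `⟪x₀, y₀⟫` loses only
`f' · (1 - ⟪x, x₀⟫) ≤ f' ε² / 2`, where `f' ≤ (1 - cos (θ₀/2))^(-s/2-1)` because every point of `B`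
makes an angle at least `θ₀/2` with `y₀`. Finally `σ(B) = O(ε^d)`, since `B` is the image of a
`d`-dimensional ball of radius `ε` under a `2`-Lipschitz chart.
-/

open Real InnerProductGeometry Metric
open scoped ENNReal NNReal

namespace Real

theorem one_add_mul_self_le_rpow_one_add_of_nonpos {x p : ℝ} (hx : -1 < x) (hp : p ≤ 0) :
    1 + p * x ≤ (1 + x) ^ p := by
  have hy : 0 < 1 + x := by linarith
  have h1p : 0 < 1 - p := by linarith
  -- weighted AM-GM for `(1 + x) ^ p` and `1 + x` with weights `1 : -p`
  have hAM := geom_mean_le_arith_mean2_weighted (w₁ := 1 / (1 - p)) (w₂ := -p / (1 - p))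
    (p₁ := (1 + x) ^ p) (p₂ := 1 + x) (by positivity) (div_nonneg (by linarith) h1p.le)
    (rpow_nonneg hy.le p) hy.le (by field_simp; ring)
  have hgeom : ((1 + x) ^ p) ^ (1 / (1 - p)) * (1 + x) ^ (-p / (1 - p)) = 1 := by
    rw [← rpow_mul hy.le, ← rpow_add hy, show p * (1 / (1 - p)) + -p / (1 - p) = 0 by
      field_simp; ring, rpow_zero]
  rw [hgeom, div_mul_eq_mul_div, div_mul_eq_mul_div, ← add_div, le_div_iff₀ h1p] at hAM
  linarith

theorem rpow_add_mul_rpow_sub_one_mul_sub_le {u v p : ℝ} (hu : 0 < u) (hv : 0 < v) (hp : p ≤ 0) :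
    u ^ p + p * u ^ (p - 1) * (v - u) ≤ v ^ p := by
  have h := one_add_mul_self_le_rpow_one_add_of_nonpos (x := v / u - 1) (by
    have := div_pos hv hu; linarith) hp
  rw [add_sub_cancel, div_rpow hv.le hu.le, le_div_iff₀ (rpow_pos_of_pos hu p)] at h
  calc u ^ p + p * u ^ (p - 1) * (v - u) = (1 + p * (v / u - 1)) * u ^ p := by
        rw [rpow_sub_one hu.ne']; field_simp
    _ ≤ v ^ p := h

theorem two_mul_rpow_midpoint_le {u v p : ℝ} (hu : 0 < u) (hv : 0 < v) (hp : p ≤ 0) :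
    2 * ((u + v) / 2) ^ p ≤ u ^ p + v ^ p := by
  have hw : 0 < (u + v) / 2 := by linarith
  have h1 := rpow_add_mul_rpow_sub_one_mul_sub_le hw hu hp
  have h2 := rpow_add_mul_rpow_sub_one_mul_sub_le hw hv hp
  linarith

theorem cos_half_arccos_lt_one {t : ℝ} (ht : 0 < arccos t) : cos (arccos t / 2) < 1 := by
  simpa using cos_lt_cos_of_nonneg_of_le_pi le_rfl (by linarith [arccos_le_pi t]) (half_pos ht)

theorem abs_sqrt_one_sub_sq_sub_sqrt_one_sub_sq_le {a b : ℝ} (ha : |a| ≤ 1 / 2)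
    (hb : |b| ≤ 1 / 2) : |√(1 - a ^ 2) - √(1 - b ^ 2)| ≤ |a - b| := by
  have ha2 : a ^ 2 ≤ 1 / 4 := by nlinarith [sq_abs a, abs_nonneg a]
  have hb2 : b ^ 2 ≤ 1 / 4 := by nlinarith [sq_abs b, abs_nonneg b]
  have hA := sq_sqrt (show 0 ≤ 1 - a ^ 2 by linarith)
  have hB := sq_sqrt (show 0 ≤ 1 - b ^ 2 by linarith)
  have hA1 : 1 / 2 ≤ √(1 - a ^ 2) := by nlinarith [sqrt_nonneg (1 - a ^ 2)]
  have hB1 : 1 / 2 ≤ √(1 - b ^ 2) := by nlinarith [sqrt_nonneg (1 - b ^ 2)]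
  have hab : |a + b| ≤ 1 := (abs_add_le a b).trans (by linarith)
  have hprod : (√(1 - a ^ 2) - √(1 - b ^ 2)) * (√(1 - a ^ 2) + √(1 - b ^ 2)) =
      (b - a) * (b + a) := by linear_combination hA - hB
  have key : |√(1 - a ^ 2) - √(1 - b ^ 2)| * (√(1 - a ^ 2) + √(1 - b ^ 2)) ≤ |a - b| * 1 := by
    rw [← abs_of_pos (by linarith : 0 < √(1 - a ^ 2) + √(1 - b ^ 2)), ← abs_mul, hprod, abs_mul,
      abs_sub_comm, add_comm b a]
    exact mul_le_mul_of_nonneg_left hab (abs_nonneg _)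
  nlinarith [abs_nonneg (√(1 - a ^ 2) - √(1 - b ^ 2))]

end Real

/-- `rieszK s x y = rieszProfile s ⟪x, y⟫` for unit vectors `x`, `y`. -/
noncomputable def rieszProfile (s t : ℝ) : ℝ := 1 / s * (2 - 2 * t) ^ (-s / 2)

section rieszProfile

variable {s a b t u : ℝ}

theorem rieszProfile_nonneg (hs : 0 ≤ s) (ht : t ≤ 1) : 0 ≤ rieszProfile s t :=
  mul_nonneg (by positivity) (rpow_nonneg (by linarith) _)

theorem rieszProfile_le_rieszProfile (hs : 0 ≤ s) (hb : b < 1) (hab : a ≤ b) :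
    rieszProfile s a ≤ rieszProfile s b :=
  mul_le_mul_of_nonneg_left (rpow_le_rpow_of_nonpos (by linarith) (by linarith) (by linarith))
    (by positivity)

theorem two_mul_rieszProfile_midpoint_le (hs : 0 ≤ s) (ha : a < 1) (hb : b < 1) :
    2 * rieszProfile s ((a + b) / 2) ≤ rieszProfile s a + rieszProfile s b := by
  have h := two_mul_rpow_midpoint_le (p := -s / 2) (by linarith : 0 < 2 - 2 * a)
    (by linarith : 0 < 2 - 2 * b) (by linarith)
  rw [show (2 - 2 * a + (2 - 2 * b)) / 2 = 2 - 2 * ((a + b) / 2) by ring] at h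
  unfold rieszProfile
  nlinarith [mul_le_mul_of_nonneg_left h (by positivity : (0 : ℝ) ≤ 1 / s)]

/-- `(2 - 2 * t) ^ (-s / 2 - 1)` is the derivative of `rieszProfile s` at `t`. -/
theorem rieszProfile_add_mul_sub_le (hs : 0 < s) (ht : t < 1) (hu : u < 1) :
    rieszProfile s t + (2 - 2 * t) ^ (-s / 2 - 1) * (u - t) ≤ rieszProfile s u := by
  have h := rpow_add_mul_rpow_sub_one_mul_sub_le (p := -s / 2) (by linarith : 0 < 2 - 2 * t)
    (by linarith : 0 < 2 - 2 * u) (by linarith)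
  unfold rieszProfile
  calc 1 / s * (2 - 2 * t) ^ (-s / 2) + (2 - 2 * t) ^ (-s / 2 - 1) * (u - t)
      = 1 / s * ((2 - 2 * t) ^ (-s / 2) +
          -s / 2 * (2 - 2 * t) ^ (-s / 2 - 1) * (2 - 2 * u - (2 - 2 * t))) := by
        field_simp; ring
    _ ≤ 1 / s * (2 - 2 * u) ^ (-s / 2) := by gcongr

theorem two_mul_rieszProfile_sub_le_add {c t₀ β ε : ℝ} (hs : 0 < s) (hab : a + b = 2 * c * t₀)
    (ha : a ≤ β) (hb : b ≤ β) (ht₀ : t₀ ≤ β) (hβ : β < 1) (hc : c ≤ 1)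
    (hcε : 1 - c ≤ ε ^ 2 / 2) :
    2 * rieszProfile s t₀ - ε ^ 2 * (1 - β) ^ (-s / 2 - 1) ≤
      rieszProfile s a + rieszProfile s b := by
  have hmid : (a + b) / 2 = c * t₀ := by rw [hab]; ring
  have hconv := two_mul_rieszProfile_midpoint_le hs.le (ha.trans_lt hβ) (hb.trans_lt hβ)
  have htan := rieszProfile_add_mul_sub_le hs (ht₀.trans_lt hβ) (u := c * t₀)
    (by rw [← hmid]; linarith)
  have hslope : (2 - 2 * t₀) ^ (-s / 2 - 1) ≤ (1 - β) ^ (-s / 2 - 1) :=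
    rpow_le_rpow_of_nonpos (by linarith) (by linarith) (by linarith)
  have hslope₀ : 0 ≤ (2 - 2 * t₀) ^ (-s / 2 - 1) := rpow_nonneg (by linarith) _
  have hβpow : 0 < (1 - β) ^ (-s / 2 - 1) := rpow_pos_of_pos (by linarith) _
  have hloss : (2 - 2 * t₀) ^ (-s / 2 - 1) * (t₀ * (1 - c)) ≤
      (1 - β) ^ (-s / 2 - 1) * (ε ^ 2 / 2) := by
    rcases le_or_gt (t₀ * (1 - c)) 0 with h | h
    · exact (mul_nonpos_of_nonneg_of_nonpos hslope₀ h).trans (by positivity)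
    · exact mul_le_mul hslope (by nlinarith) h.le hβpow.le
  rw [hmid] at hconv
  linarith

end rieszProfile

section Sphere

variable {E : Type*} [NormedAddCommGroup E] [InnerProductSpace ℝ E]

def geodesicBall (x₀ : E) (ε : ℝ) : Set E := {x | x ∈ sphere 0 1 ∧ arccos ⟪x, x₀⟫_ℝ < ε}

theorem rieszK_eq_rieszProfile (s : ℝ) {x y : E} (hx : ‖x‖ = 1) (hy : ‖y‖ = 1) :
    rieszK s x y = rieszProfile s ⟪x, y⟫_ℝ := by
  have hsq : ‖x - y‖ ^ 2 = 2 - 2 * ⟪x, y⟫_ℝ := by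
    rw [norm_sub_sq_real, hx, hy]; ring
  rw [rieszK, rieszProfile, ← hsq, ← rpow_natCast, ← rpow_mul (norm_nonneg _)]
  congr 2
  ring

theorem angle_eq_arccos_inner_of_norm_eq_one {x y : E} (hx : ‖x‖ = 1) (hy : ‖y‖ = 1) :
    angle x y = arccos ⟪x, y⟫_ℝ := by
  simp [angle, hx, hy]

theorem inner_le_cos_of_mem_geodesicBall {x₀ y₀ x : E} {ε : ℝ} (hx₀ : ‖x₀‖ = 1) (hy₀ : ‖y₀‖ = 1)
    (hε : ε ≤ arccos ⟪x₀, y₀⟫_ℝ / 2) (hx : x ∈ geodesicBall x₀ ε) :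
    ⟪x, y₀⟫_ℝ ≤ cos (arccos ⟪x₀, y₀⟫_ℝ / 2) := by
  obtain ⟨hx1, hxε⟩ := hx
  rw [mem_sphere_zero_iff_norm] at hx1
  have htri := angle_le_angle_add_angle x₀ x y₀
  rw [← cos_angle_mul_norm_mul_norm, hx1, hy₀, mul_one, mul_one]
  rw [angle_comm x₀ x, angle_eq_arccos_inner_of_norm_eq_one hx1 hx₀,
    angle_eq_arccos_inner_of_norm_eq_one hx₀ hy₀] at htri
  exact cos_le_cos_of_nonneg_of_le_pi (by linarith [arccos_nonneg ⟪x₀, y₀⟫_ℝ])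
    (angle_le_pi x y₀) (by linarith)

theorem inner_reflection_add_inner {u : E} (hu : ‖u‖ = 1) (v w : E) :
    ⟪(ℝ ∙ u).reflection v, w⟫_ℝ + ⟪v, w⟫_ℝ = 2 * ⟪v, u⟫_ℝ * ⟪u, w⟫_ℝ := by
  rw [Submodule.reflection_singleton_apply, hu, inner_sub_left, two_smul, inner_add_left,
    real_inner_smul_left, real_inner_comm u v]
  simp only [Real.ringHom_apply, one_pow, div_one, sub_add_cancel]
  ring

theorem reflection_preimage_geodesicBall {x₀ : E} (hx₀ : ‖x₀‖ = 1) (ε : ℝ) :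
    (ℝ ∙ x₀).reflection ⁻¹' geodesicBall x₀ ε = geodesicBall x₀ ε := by
  ext x
  have h := inner_reflection_add_inner hx₀ x x₀
  rw [real_inner_self_eq_norm_sq, hx₀] at h
  simp only [geodesicBall, Set.mem_preimage, Set.mem_ofPred_eq, mem_sphere_zero_iff_norm,
    LinearIsometryEquiv.norm_map, show ⟪(ℝ ∙ x₀).reflection x, x₀⟫_ℝ = ⟪x, x₀⟫_ℝ by linarith]

theorem measurableSet_geodesicBall [MeasurableSpace E] [OpensMeasurableSpace E] (x₀ : E)
    (ε : ℝ) : MeasurableSet (geodesicBall x₀ ε) :=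
  isClosed_sphere.measurableSet.inter
    (measurableSet_lt (continuous_arccos.comp (continuous_id.inner continuous_const)).measurable
      measurable_const)

end Sphere

section MeanValue

variable {E : Type*} [NormedAddCommGroup E] [InnerProductSpace ℝ E]
  {s ε : ℝ} {x₀ y₀ : E}

theorem two_mul_rieszK_sub_le_add_rieszK_reflection (hs : 0 < s) (hx₀ : ‖x₀‖ = 1)
    (hy₀ : ‖y₀‖ = 1) (hθ₀ : 0 < arccos ⟪x₀, y₀⟫_ℝ) (hε : ε ≤ arccos ⟪x₀, y₀⟫_ℝ / 2) {x : E}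
    (hx : x ∈ geodesicBall x₀ ε) :
    2 * rieszK s x₀ y₀ - ε ^ 2 * (1 - cos (arccos ⟪x₀, y₀⟫_ℝ / 2)) ^ (-s / 2 - 1) ≤
      rieszK s x y₀ + rieszK s ((ℝ ∙ x₀).reflection x) y₀ := by
  set R := (ℝ ∙ x₀).reflection
  have hx1 : ‖x‖ = 1 := mem_sphere_zero_iff_norm.mp hx.1
  have hRx : R x ∈ geodesicBall x₀ ε := by
    rwa [← Set.mem_preimage, reflection_preimage_geodesicBall hx₀]
  have hc : |⟪x, x₀⟫_ℝ| ≤ 1 := by simpa [hx1, hx₀] using abs_real_inner_le_norm x x₀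
  have hcε : 1 - ⟪x, x₀⟫_ℝ ≤ ε ^ 2 / 2 := by
    have h := one_sub_sq_div_two_le_cos (x := arccos ⟪x, x₀⟫_ℝ)
    rw [cos_arccos (abs_le.mp hc).1 (abs_le.mp hc).2] at h
    nlinarith [arccos_nonneg ⟪x, x₀⟫_ℝ, hx.2]
  have hx₀B : x₀ ∈ geodesicBall x₀ (arccos ⟪x₀, y₀⟫_ℝ / 2) :=
    ⟨by simpa using hx₀, by simpa [hx₀] using hθ₀⟩
  have ht₀ := inner_le_cos_of_mem_geodesicBall hx₀ hy₀ le_rfl hx₀B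
  rw [rieszK_eq_rieszProfile s hx₀ hy₀, rieszK_eq_rieszProfile s hx1 hy₀,
    rieszK_eq_rieszProfile s (by simpa [R] using hx1) hy₀]
  exact two_mul_rieszProfile_sub_le_add hs
    (by rw [← inner_reflection_add_inner hx₀ x y₀]; ring)
    (inner_le_cos_of_mem_geodesicBall hx₀ hy₀ hε hx)
    (inner_le_cos_of_mem_geodesicBall hx₀ hy₀ hε hRx) ht₀ (cos_half_arccos_lt_one hθ₀)
    (abs_le.mp hc).2 hcε

theorem norm_rieszK_le_of_mem_geodesicBall (hs : 0 < s) (hx₀ : ‖x₀‖ = 1) (hy₀ : ‖y₀‖ = 1)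
    (hθ₀ : 0 < arccos ⟪x₀, y₀⟫_ℝ) (hε : ε ≤ arccos ⟪x₀, y₀⟫_ℝ / 2) {x : E}
    (hx : x ∈ geodesicBall x₀ ε) :
    ‖rieszK s x y₀‖ ≤ rieszProfile s (cos (arccos ⟪x₀, y₀⟫_ℝ / 2)) := by
  have hβ := cos_half_arccos_lt_one hθ₀
  have hxy := inner_le_cos_of_mem_geodesicBall hx₀ hy₀ hε hx
  rw [rieszK_eq_rieszProfile s (mem_sphere_zero_iff_norm.mp hx.1) hy₀, Real.norm_eq_abs,
    abs_of_nonneg (rieszProfile_nonneg hs.le (by linarith))]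
  exact rieszProfile_le_rieszProfile hs.le hβ hxy

theorem integrableOn_rieszK_geodesicBall [MeasurableSpace E] [OpensMeasurableSpace E]
    {μ : Measure E} [IsFiniteMeasure μ] (hs : 0 < s) (hx₀ : ‖x₀‖ = 1) (hy₀ : ‖y₀‖ = 1)
    (hθ₀ : 0 < arccos ⟪x₀, y₀⟫_ℝ) (hε : ε ≤ arccos ⟪x₀, y₀⟫_ℝ / 2) :
    IntegrableOn (fun x ↦ rieszK s x y₀) (geodesicBall x₀ ε) μ :=
  Measure.integrableOn_of_bounded (measure_ne_top _ _)
    (((continuous_id.sub continuous_const).norm.measurable.pow_const _).const_mul _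
      |>.aestronglyMeasurable) <|
    ae_restrict_of_forall_mem (measurableSet_geodesicBall x₀ ε)
      fun _ ↦ norm_rieszK_le_of_mem_geodesicBall hs hx₀ hy₀ hθ₀ hε

theorem measureReal_mul_le_setIntegral_rieszK_geodesicBall [MeasurableSpace E] [BorelSpace E]
    {μ : Measure E} [IsFiniteMeasure μ] (hs : 0 < s) (hx₀ : ‖x₀‖ = 1) (hy₀ : ‖y₀‖ = 1)
    (hθ₀ : 0 < arccos ⟪x₀, y₀⟫_ℝ) (hε : ε ≤ arccos ⟪x₀, y₀⟫_ℝ / 2)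
    (hμ : MeasurePreserving (ℝ ∙ x₀).reflection μ μ) :
    μ.real (geodesicBall x₀ ε) * (rieszK s x₀ y₀ -
        ε ^ 2 / 2 * (1 - cos (arccos ⟪x₀, y₀⟫_ℝ / 2)) ^ (-s / 2 - 1)) ≤
      ∫ x in geodesicBall x₀ ε, rieszK s x y₀ ∂μ := by
  set R := (ℝ ∙ x₀).reflection
  set B := geodesicBall x₀ ε
  have hB := measurableSet_geodesicBall x₀ ε
  have hint := integrableOn_rieszK_geodesicBall (μ := μ) hs hx₀ hy₀ hθ₀ hε
  have hintR : IntegrableOn (fun x ↦ rieszK s (R x) y₀) B μ := by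
    have h := (hμ.integrableOn_comp_preimage R.toHomeomorph.measurableEmbedding).mpr hint
    rwa [reflection_preimage_geodesicBall hx₀] at h
  have hswap : ∫ x in B, rieszK s (R x) y₀ ∂μ = ∫ x in B, rieszK s x y₀ ∂μ := by
    have h := hμ.setIntegral_preimage_emb R.toHomeomorph.measurableEmbedding
      (fun x ↦ rieszK s x y₀) B
    rwa [reflection_preimage_geodesicBall hx₀] at h
  have hpoint := fun x (hx : x ∈ B) ↦
    two_mul_rieszK_sub_le_add_rieszK_reflection hs hx₀ hy₀ hθ₀ hε hx
  calc μ.real B * (rieszK s x₀ y₀ -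
        ε ^ 2 / 2 * (1 - cos (arccos ⟪x₀, y₀⟫_ℝ / 2)) ^ (-s / 2 - 1))
      = (∫ _ in B, (2 * rieszK s x₀ y₀ -
          ε ^ 2 * (1 - cos (arccos ⟪x₀, y₀⟫_ℝ / 2)) ^ (-s / 2 - 1)) ∂μ) / 2 := by
        rw [setIntegral_const, smul_eq_mul]; ring
    _ ≤ (∫ x in B, (rieszK s x y₀ + rieszK s (R x) y₀) ∂μ) / 2 := by
        gcongr ?_ / 2
        exact setIntegral_mono_on (integrableOn_const (measure_ne_top _ _)) (hint.add hintR)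
          hB hpoint
    _ = ∫ x in B, rieszK s x y₀ ∂μ := by
        rw [integral_add hint hintR, hswap]; ring

end MeanValue

section Chart

variable {E : Type*} [NormedAddCommGroup E] [InnerProductSpace ℝ E]

/-- The inverse of the orthogonal projection of the upper hemisphere around `x₀` onto `x₀ᗮ`. -/
noncomputable def sphereChart (x₀ : E) (w : (ℝ ∙ x₀)ᗮ) : E := √(1 - ‖w‖ ^ 2) • x₀ + w

theorem lipschitzOnWith_sphereChart {x₀ : E} (hx₀ : ‖x₀‖ = 1) :
    LipschitzOnWith 2 (sphereChart x₀) (closedBall 0 (1 / 2)) := by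
  refine LipschitzOnWith.of_dist_le_mul fun w₁ hw₁ w₂ hw₂ ↦ ?_
  rw [mem_closedBall_zero_iff] at hw₁ hw₂
  have hsqrt := abs_sqrt_one_sub_sq_sub_sqrt_one_sub_sq_le
    (by rwa [abs_norm] : |‖w₁‖| ≤ 1 / 2) (by rwa [abs_norm] : |‖w₂‖| ≤ 1 / 2)
  rw [dist_eq_norm, dist_eq_norm, sphereChart, sphereChart,
    add_sub_add_comm, ← sub_smul, ← Submodule.coe_sub]
  calc ‖(√(1 - ‖w₁‖ ^ 2) - √(1 - ‖w₂‖ ^ 2)) • x₀ + ((w₁ - w₂ : (ℝ ∙ x₀)ᗮ) : E)‖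
      ≤ |√(1 - ‖w₁‖ ^ 2) - √(1 - ‖w₂‖ ^ 2)| + ‖w₁ - w₂‖ := by
        refine (norm_add_le _ _).trans_eq ?_
        rw [norm_smul, hx₀, mul_one, Real.norm_eq_abs]; rfl
    _ ≤ ‖w₁ - w₂‖ + ‖w₁ - w₂‖ := by gcongr; exact hsqrt.trans (abs_norm_sub_norm_le w₁ w₂)
    _ = (2 : ℝ≥0) * ‖w₁ - w₂‖ := by push_cast; ring

theorem geodesicBall_subset_image_sphereChart {x₀ : E} (hx₀ : ‖x₀‖ = 1) {ε : ℝ}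
    (hε : ε ≤ π / 2) : geodesicBall x₀ ε ⊆ sphereChart x₀ '' closedBall 0 ε := by
  rintro x ⟨hx, hxε⟩
  rw [mem_sphere_zero_iff_norm] at hx
  set c := ⟪x, x₀⟫_ℝ
  have hc : 0 < c := arccos_lt_pi_div_two.mp (hxε.trans_le hε)
  have hv : x - c • x₀ ∈ (ℝ ∙ x₀)ᗮ := by
    rw [Submodule.mem_orthogonal_singleton_iff_inner_right, inner_sub_right,
      real_inner_smul_right, real_inner_self_eq_norm_sq, hx₀, real_inner_comm]
    ring
  have hvnorm : ‖x - c • x₀‖ ^ 2 = 1 - c ^ 2 := by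
    rw [norm_sub_sq_real, real_inner_smul_right, norm_smul, hx, hx₀, Real.norm_eq_abs, mul_one,
      sq_abs]
    ring
  refine ⟨⟨x - c • x₀, hv⟩, ?_, ?_⟩
  · rw [mem_closedBall_zero_iff, Submodule.coe_norm, ← sqrt_sq (norm_nonneg _), hvnorm,
      ← sin_arccos]
    exact (sin_le (arccos_nonneg c)).trans hxε.le
  · rw [sphereChart, Submodule.coe_norm, hvnorm, sub_sub_cancel, sqrt_sq hc.le]
    simp

theorem hausdorffMeasure_geodesicBall_le [MeasurableSpace E] [BorelSpace E] (d : ℕ) [Fact (Module.finrank ℝ E = d + 1)] {x₀ : E}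
    (hx₀ : ‖x₀‖ = 1) {ε : ℝ} (hε₀ : 0 ≤ ε) (hε : ε ≤ 1 / 2) :
    μH[d] (geodesicBall x₀ ε) ≤
      2 ^ d * μH[d] (closedBall (0 : EuclideanSpace ℝ (Fin d)) 1) * ENNReal.ofReal (ε ^ d) := by
  have hx₀' : x₀ ≠ 0 := by rintro rfl; simp at hx₀
  set e := (OrthonormalBasis.fromOrthogonalSpanSingleton (𝕜 := ℝ) d hx₀').repr
  have hcover := geodesicBall_subset_image_sphereChart hx₀ (hε.trans (by linarith [pi_gt_three]))
  have hlip := (lipschitzOnWith_sphereChart hx₀).mono (closedBall_subset_closedBall hε)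
  calc μH[d] (geodesicBall x₀ ε)
      ≤ μH[d] (sphereChart x₀ '' closedBall 0 ε) := measure_mono hcover
    _ ≤ 2 ^ d * μH[d] (closedBall (0 : (ℝ ∙ x₀)ᗮ) ε) := by
        simpa using hlip.hausdorffMeasure_image_le (Nat.cast_nonneg d)
    _ = 2 ^ d * μH[d] (closedBall (0 : EuclideanSpace ℝ (Fin d)) ε) := by
        rw [← e.toIsometryEquiv.hausdorffMeasure_image, IsometryEquiv.image_closedBall]
        simp [e]
    _ = _ := by
        rw [Measure.addHaar_closedBall' _ _ hε₀, finrank_euclideanSpace_fin]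
        ring

end Chart

section SphereSigma

variable (d : ℕ)

instance : IsFiniteMeasure (sphereSigma d) where
  measure_univ_lt_top := by
    rw [sphereSigma, Measure.smul_apply, Measure.restrict_apply_univ, smul_eq_mul]
    exact (ENNReal.inv_mul_le_one _).trans_lt ENNReal.one_lt_top

theorem measurePreserving_sphereSigma
    (L : EuclideanSpace ℝ (Fin (d + 1)) ≃ₗᵢ[ℝ] EuclideanSpace ℝ (Fin (d + 1))) :
    MeasurePreserving L (sphereSigma d) (sphereSigma d) := by
  have h := (L.toIsometryEquiv.measurePreserving_hausdorffMeasure d).restrict_preimage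
    (isClosed_sphere (x := 0) (ε := 1)).measurableSet
  rw [LinearIsometryEquiv.coe_toIsometryEquiv, L.preimage_sphere, map_zero] at h
  exact h.smul_measure _

theorem exists_sphereSigma_geodesicBall_le :
    ∃ A ≥ 0, ∀ x₀ : EuclideanSpace ℝ (Fin (d + 1)), ‖x₀‖ = 1 → ∀ ε, 0 ≤ ε → ε ≤ 1 / 2 →
      (sphereSigma d).real (geodesicBall x₀ ε) ≤ A * ε ^ d := by
  have : Fact (Module.finrank ℝ (EuclideanSpace ℝ (Fin (d + 1))) = d + 1) :=
    ⟨finrank_euclideanSpace_fin⟩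
  refine ⟨(μH[d] (sphere (0 : EuclideanSpace ℝ (Fin (d + 1))) 1))⁻¹.toReal *
    (2 ^ d * μH[d] (closedBall (0 : EuclideanSpace ℝ (Fin d)) 1)).toReal, by positivity, ?_⟩
  intro x₀ hx₀ ε hε₀ hε
  have hsub : geodesicBall x₀ ε ∩ sphere 0 1 = geodesicBall x₀ ε := Set.inter_eq_left.mpr
    fun _ hx ↦ hx.1
  have hfin : 2 ^ d * μH[d] (closedBall (0 : EuclideanSpace ℝ (Fin d)) 1) ≠ ∞ :=
    ENNReal.mul_ne_top (by simp) measure_closedBall_lt_top.ne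
  rw [measureReal_def, sphereSigma, Measure.smul_apply,
    Measure.restrict_apply (measurableSet_geodesicBall x₀ ε),
    hsub, smul_eq_mul, ENNReal.toReal_mul, mul_assoc]
  gcongr
  calc (μH[d] (geodesicBall x₀ ε)).toReal
      ≤ (2 ^ d * μH[d] (closedBall (0 : EuclideanSpace ℝ (Fin d)) 1) *
          ENNReal.ofReal (ε ^ d)).toReal :=
        ENNReal.toReal_mono (ENNReal.mul_ne_top hfin ENNReal.ofReal_ne_top)
          (hausdorffMeasure_geodesicBall_le d hx₀ hε₀ hε)
    _ = _ := by rw [ENNReal.toReal_mul, ENNReal.toReal_ofReal (by positivity)]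

end SphereSigma

theorem riesz_kernel_geodesic_ball_mean_value_general
    (d : ℕ) (s : ℝ) (hs0 : 0 < s) (hs1 : s < (d : ℝ) - 2) :
    ∃ C > 0, ∃ ε₀ > 0, ∀ x₀ y₀ : EuclideanSpace ℝ (Fin (d + 1)),
      x₀ ∈ Metric.sphere (0 : EuclideanSpace ℝ (Fin (d + 1))) 1 →
      y₀ ∈ Metric.sphere (0 : EuclideanSpace ℝ (Fin (d + 1))) 1 →
      0 < Real.arccos ⟪x₀, y₀⟫_ℝ →
      ∀ ε : ℝ, 0 < ε → ε ≤ min ε₀ (Real.arccos ⟪x₀, y₀⟫_ℝ / 2) →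
        (sphereSigma d {x | x ∈ Metric.sphere (0 : EuclideanSpace ℝ (Fin (d + 1))) 1 ∧
              Real.arccos ⟪x, x₀⟫_ℝ < ε}).toReal * rieszK s x₀ y₀ +
            C * (s + 2 - 2 * (d : ℝ)) *
              (1 - Real.cos (Real.arccos ⟪x₀, y₀⟫_ℝ / 2)) ^ (-s / 2 - 1) * ε ^ (d + 2) ≤
          ∫ x in {x | x ∈ Metric.sphere (0 : EuclideanSpace ℝ (Fin (d + 1))) 1 ∧
              Real.arccos ⟪x, x₀⟫_ℝ < ε}, rieszK s x y₀ ∂(sphereSigma d) := by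
  obtain ⟨A, hA₀, hA⟩ := exists_sphereSigma_geodesicBall_le d
  have hgap : 0 < 2 * (d : ℝ) - 2 - s := by linarith [(d.cast_nonneg : (0 : ℝ) ≤ d)]
  refine ⟨(A + 1) / (2 * (2 * d - 2 - s)), by positivity, 1 / 2, by norm_num, ?_⟩
  intro x₀ y₀ hx₀ hy₀ hθ₀ ε hε hεle
  rw [mem_sphere_zero_iff_norm] at hx₀ hy₀
  have hmean := measureReal_mul_le_setIntegral_rieszK_geodesicBall hs0 hx₀ hy₀ hθ₀
    (hεle.trans (min_le_right _ _)) (measurePreserving_sphereSigma d _)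
  have hσ := hA x₀ hx₀ ε hε.le (hεle.trans (min_le_left _ _))
  set W := (1 - cos (arccos ⟪x₀, y₀⟫_ℝ / 2)) ^ (-s / 2 - 1)
  have hW : 0 < W := rpow_pos_of_pos (sub_pos.mpr (cos_half_arccos_lt_one hθ₀)) _
  have hC : (A + 1) / (2 * (2 * d - 2 - s)) * (s + 2 - 2 * d) = -((A + 1) / 2) := by
    rw [div_mul_eq_mul_div, div_eq_iff (by positivity)]; ring
  have hσW := mul_le_mul_of_nonneg_right hσ (by positivity : 0 ≤ ε ^ 2 / 2 * W)
  change (sphereSigma d).real (geodesicBall x₀ ε) * _ + _ ≤ ∫ x in geodesicBall x₀ ε, _ ∂_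
  rw [hC, pow_add]
  refine le_trans ?_ hmean
  nlinarith [mul_pos (mul_pos hW (pow_pos hε d)) (pow_pos hε 2)]

/-- mean-value lower bound for the Riesz `s`-kernel over geodesic
balls on `𝕊^d`, `d ≥ 3`, `0 < s < d - 2`. Here the geodesic ball is
`B_g(x₀,ε) = {x ∈ 𝕊^d : arccos⟨x,x₀⟩ < ε}` and `θ₀ = arccos⟨x₀,y₀⟩`. -/
theorem riesz_kernel_geodesic_ball_mean_value
    (d : ℕ) (hd : 3 ≤ d) (s : ℝ) (hs0 : 0 < s) (hs1 : s < (d : ℝ) - 2) :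
    ∃ C > 0, ∃ ε₀ > 0, ∀ x₀ y₀ : EuclideanSpace ℝ (Fin (d + 1)),
      x₀ ∈ Metric.sphere (0 : EuclideanSpace ℝ (Fin (d + 1))) 1 →
      y₀ ∈ Metric.sphere (0 : EuclideanSpace ℝ (Fin (d + 1))) 1 →
      0 < Real.arccos ⟪x₀, y₀⟫_ℝ →
      ∀ ε : ℝ, 0 < ε → ε ≤ min ε₀ (Real.arccos ⟪x₀, y₀⟫_ℝ / 2) →
        (sphereSigma d {x | x ∈ Metric.sphere (0 : EuclideanSpace ℝ (Fin (d + 1))) 1 ∧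
              Real.arccos ⟪x, x₀⟫_ℝ < ε}).toReal * rieszK s x₀ y₀ +
            C * (s + 2 - 2 * (d : ℝ)) *
              (1 - Real.cos (Real.arccos ⟪x₀, y₀⟫_ℝ / 2)) ^ (-s / 2 - 1) * ε ^ (d + 2) ≤
          ∫ x in {x | x ∈ Metric.sphere (0 : EuclideanSpace ℝ (Fin (d + 1))) 1 ∧
              Real.arccos ⟪x, x₀⟫_ℝ < ε}, rieszK s x y₀ ∂(sphereSigma d) :=
  riesz_kernel_geodesic_ball_mean_value_general d s hs0 hs1
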